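/- No approval-with-runoff rule F^R is both clone-proof and Pareto-efficient. -/
import Mathlib


/-- A voter: an approval set together with a ranking of the candidates
(`rank x < rank y` means `x` is preferred to `y`). -/
structure Voter (C : Type*) where
  approves : Finset C
  rank : C → ℕ

attribute [local instance] Classical.decEq

variable {C : Type*} [DecidableEq C]

/-- A voter is valid with respect to the candidate set `S`: she approves only
candidates of `S`, her ranking is linear on `S`, and her approval ballot is
consistent with her ranking. -/
def ValidOn (S : Finset C) (v : Voter C) : Prop :=
  v.approves ⊆ S ∧
  (∀ x ∈ S, ∀ y ∈ S, x ≠ y → v.rank x ≠ v.rank y) ∧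
  (∀ a ∈ v.approves, ∀ b ∈ S, b ∉ v.approves → v.rank a < v.rank b)

/-- Number of voters preferring `x` to `y`. -/
def majCount (P : Multiset (Voter C)) (x y : C) : ℕ :=
  (P.filter (fun v => v.rank x < v.rank y)).card

/-- Majority winners between `x` and `y` (both in case of a tie). -/
def maj (P : Multiset (Voter C)) (x y : C) : Set C :=
  {z | (z = x ∧ majCount P y x ≤ majCount P x y) ∨
       (z = y ∧ majCount P x y ≤ majCount P y x)}

/-- The approval part of a profile. -/
def approvalProfile (P : Multiset (Voter C)) : Multiset (Finset C) :=
  P.map Voter.approves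

/-- The approval-with-runoff rule `F^R` induced by an ABC rule `F`, over
candidate set `S`. -/
def runoff (F : Finset C → Multiset (Finset C) → Set (C × C))
    (S : Finset C) (P : Multiset (Voter C)) : Set C :=
  {w | ∃ p ∈ F S (approvalProfile P), w ∈ maj P p.1 p.2}

/-- `a` unanimously preference-approval dominates `b`. -/
def Dominates (P : Multiset (Voter C)) (a b : C) : Prop :=
  (∀ v ∈ P, v.rank a < v.rank b) ∧ ∃ v ∈ P, a ∈ v.approves ∧ b ∉ v.approves

/-- Pareto-efficiency of `F^R`. -/
def ParetoEfficient (F : Finset C → Multiset (Finset C) → Set (C × C)) : Prop :=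
  ∀ S : Finset C, ∀ P : Multiset (Voter C), (∀ v ∈ P, ValidOn S v) →
    ∀ a ∈ S, ∀ b ∈ S, Dominates P a b → b ∉ runoff F S P

/-- `v'` is the cloning of voter `v`, where `a'` clones candidate `a`:
`v'` approves `a'` iff she approves `a`, her ballot otherwise agrees with `v`,
her preferences over candidates other than `a'` agree with those of `v`, and
`a'` is ranked adjacent to `a`. -/
def VoterClone (a a' : C) (v v' : Voter C) : Prop :=
  (a' ∈ v'.approves ↔ a ∈ v.approves) ∧
  v'.approves \ {a'} = v.approves ∧
  (∀ x y, x ≠ a' → y ≠ a' → (v'.rank x < v'.rank y ↔ v.rank x < v.rank y)) ∧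
  (∀ x, x ≠ a → x ≠ a' → (v'.rank a < v'.rank x ↔ v'.rank a' < v'.rank x))

/-- `P'` is an `a`-cloning extension of `P` with clone `a'`. -/
def CloneExt (a a' : C) (P P' : Multiset (Voter C)) : Prop :=
  Multiset.Rel (VoterClone a a') P P'

/-- Clone-proofness of `F^R`: cloning a candidate leaves the winners other than
the cloned candidate unchanged, and the cloned candidate wins in the original
profile iff one of its copies wins in the extension. -/
def CloneProof (F : Finset C → Multiset (Finset C) → Set (C × C)) : Prop :=
  ∀ S : Finset C, ∀ P P' : Multiset (Voter C), ∀ a a' : C,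
    a ∈ S → a' ∉ S →
    (∀ v ∈ P, ValidOn S v) → (∀ v ∈ P', ValidOn (insert a' S) v) →
    CloneExt a a' P P' →
    (∀ c ∈ S, c ≠ a → (c ∈ runoff F S P ↔ c ∈ runoff F (insert a' S) P')) ∧
    (a ∈ runoff F S P ↔ (runoff F (insert a' S) P' ∩ {a, a'}).Nonempty)

/-- Auxiliary: with the one-voter profile where a single voter (approving
nothing) prefers `c` to `a`, clone-proofness forces `F` never to select the
pair of clones `{a, a'}` on the extended candidate set. -/
lemma exclude_pair {C : Type*} [DecidableEq C]
    (F : Finset C → Multiset (Finset C) → Set (C × C))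
    (hpair : ∀ S V p, p ∈ F S V → p.1 ∈ S ∧ p.2 ∈ S ∧ p.1 ≠ p.2)
    (hF : CloneProof F) (a a' c : C)
    (h1 : a ≠ a') (h2 : a ≠ c) (h3 : a' ≠ c) :
    (a, a') ∉ F (insert a' ({a, c} : Finset C)) ({∅} : Multiset (Finset C)) ∧
    (a', a) ∉ F (insert a' ({a, c} : Finset C)) ({∅} : Multiset (Finset C)) := by
  classical
  set v : Voter C := ⟨∅, fun z => if z = a then 1 else 0⟩ with hv
  set v' : Voter C := ⟨∅, fun z => if z = a' then 3 else if z = a then 2 else 0⟩ with hv'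
  have hvr : ∀ z, v.rank z = if z = a then 1 else 0 := fun z => rfl
  have hvr' : ∀ z, v'.rank z = if z = a' then 3 else if z = a then 2 else 0 := fun z => rfl
  -- validity of the base profile
  have hval : ∀ w ∈ ({v} : Multiset (Voter C)), ValidOn ({a, c} : Finset C) w := by
    intro w hw
    rw [Multiset.mem_singleton] at hw; subst hw
    refine ⟨by simp [hv], ?_, by simp [hv]⟩
    intro y hy z hz hyz
    simp only [Finset.mem_insert, Finset.mem_singleton] at hy hz
    rcases hy with rfl | rfl <;> rcases hz with rfl | rfl <;>
      simp_all [hvr, h2, Ne.symm h2]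
  -- validity of the extended profile
  have hval' : ∀ w ∈ ({v'} : Multiset (Voter C)),
      ValidOn (insert a' ({a, c} : Finset C)) w := by
    intro w hw
    rw [Multiset.mem_singleton] at hw; subst hw
    refine ⟨by simp [hv'], ?_, by simp [hv']⟩
    intro y hy z hz hyz
    simp only [Finset.mem_insert, Finset.mem_singleton] at hy hz
    rcases hy with rfl | rfl | rfl <;> rcases hz with rfl | rfl | rfl <;>
      simp_all [hvr', h1, h2, h3, Ne.symm h1, Ne.symm h2, Ne.symm h3]
  -- cloning relation
  have hclone : CloneExt a a' ({v} : Multiset (Voter C)) ({v'} : Multiset (Voter C)) := by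
    refine Multiset.Rel.cons ?_ Multiset.Rel.zero
    refine ⟨by simp [hv, hv'], by simp [hv, hv'], ?_, ?_⟩
    · intro y z hy hz
      rw [hvr, hvr, hvr' y, hvr' z, if_neg hy, if_neg hz]
      by_cases hya : y = a <;> by_cases hza : z = a <;> simp [hya, hza]
    · intro z hza hza'
      rw [hvr' a, hvr' a', hvr' z, if_neg h1, if_pos rfl, if_pos rfl, if_neg hza', if_neg hza]
      simp
  have hap : approvalProfile ({v} : Multiset (Voter C)) = ({∅} : Multiset (Finset C)) := by
    simp [approvalProfile, hv]
  have hap' : approvalProfile ({v'} : Multiset (Voter C)) = ({∅} : Multiset (Finset C)) := by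
    simp [approvalProfile, hv']
  have hcount : ∀ (w : Voter C) (y z : C),
      majCount ({w} : Multiset (Voter C)) y z = if w.rank y < w.rank z then 1 else 0 := by
    intro w y z
    simp [majCount, Multiset.filter_singleton, apply_ite Multiset.card]
  -- a does not win the base runoff
  have hnota : a ∉ runoff F ({a, c} : Finset C) ({v} : Multiset (Voter C)) := by
    rintro ⟨⟨q1, q2⟩, hq, hmaj⟩
    rw [hap] at hq
    obtain ⟨hq1, hq2, hq12⟩ := hpair _ _ _ hq
    simp only [Finset.mem_insert, Finset.mem_singleton] at hq1 hq2
    have hca : v.rank c < v.rank a := by rw [hvr, hvr, if_pos rfl, if_neg (Ne.symm h2)]; omega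
    have hac : ¬ v.rank a < v.rank c := by rw [hvr, hvr, if_pos rfl, if_neg (Ne.symm h2)]; omega
    rcases hq1 with rfl | rfl <;> rcases hq2 with rfl | rfl <;>
      simp_all [maj, hcount, h2, Ne.symm h2]
  have hmem : a ∈ ({a, c} : Finset C) := by simp
  have hnmem : a' ∉ ({a, c} : Finset C) := by simp [Ne.symm h1, h3]
  have hkey := (hF ({a, c} : Finset C) {v} {v'} a a' hmem hnmem hval hval' hclone).2
  have hempty : ¬ (runoff F (insert a' ({a, c} : Finset C)) ({v'} : Multiset (Voter C))
      ∩ {a, a'}).Nonempty := by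
    intro hns
    exact hnota (hkey.mpr hns)
  have haa' : v'.rank a < v'.rank a' := by
    rw [hvr' a, hvr' a', if_neg h1, if_pos rfl, if_pos rfl]; omega
  constructor
  · intro hmemF
    apply hempty
    refine ⟨a, ⟨(a, a'), by rwa [hap'], ?_⟩, by simp⟩
    left
    refine ⟨rfl, ?_⟩
    show majCount {v'} a' a ≤ majCount {v'} a a'
    rw [hcount, hcount, if_pos haa', if_neg (by omega)]
    omega
  · intro hmemF
    apply hempty
    refine ⟨a, ⟨(a', a), by rwa [hap'], ?_⟩, by simp⟩
    right
    refine ⟨rfl, ?_⟩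
    show majCount {v'} a' a ≤ majCount {v'} a a'
    rw [hcount, hcount, if_pos haa', if_neg (by omega)]
    omega

/-- No approval-with-runoff rule is both clone-proof and Pareto-efficient. -/
theorem no_cloneproof_and_pareto {C : Type*} [DecidableEq C]
    (a b x : C) (hab : a ≠ b) (hax : a ≠ x) (hbx : b ≠ x)
    (F : Finset C → Multiset (Finset C) → Set (C × C))
    (hne : ∀ (S : Finset C) (V : Multiset (Finset C)), 2 ≤ S.card → (F S V).Nonempty)
    (hpair : ∀ S V p, p ∈ F S V → p.1 ∈ S ∧ p.2 ∈ S ∧ p.1 ≠ p.2) :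
    ¬ (CloneProof F ∧ ParetoEfficient F) := by
  rintro ⟨hCP, -⟩
  have k1 := exclude_pair F hpair hCP a x b hax hab (Ne.symm hbx)
  have k2 := exclude_pair F hpair hCP b x a hbx (Ne.symm hab) (Ne.symm hax)
  have k3 := exclude_pair F hpair hCP a b x hab hax hbx
  have hS2 : (insert x ({b, a} : Finset C)) = insert x ({a, b} : Finset C) := by
    ext z; simp; tauto
  have hS3 : (insert b ({a, x} : Finset C)) = insert x ({a, b} : Finset C) := by
    ext z; simp; tauto
  rw [hS2] at k2
  rw [hS3] at k3
  have hcard : 2 ≤ (insert x ({a, b} : Finset C)).card := by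
    have h2 : ({a, b} : Finset C).card = 2 := Finset.card_pair hab
    calc 2 = ({a, b} : Finset C).card := h2.symm
    _ ≤ _ := Finset.card_le_card (Finset.subset_insert _ _)
  obtain ⟨p, hp⟩ := hne (insert x ({a, b} : Finset C)) ({∅} : Multiset (Finset C)) hcard
  obtain ⟨hp1, hp2, hp12⟩ := hpair _ _ _ hp
  obtain ⟨p1, p2⟩ := p
  simp only [Finset.mem_insert, Finset.mem_singleton] at hp1 hp2
  simp only at hp12
  rcases hp1 with rfl | rfl | rfl <;> rcases hp2 with rfl | rfl | rfl
  · exact hp12 rfl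
  · exact k1.2 hp
  · exact k2.2 hp
  · exact k1.1 hp
  · exact hp12 rfl
  · exact k3.1 hp
  · exact k2.1 hp
  · exact k3.2 hp
  · exact hp12 rfl
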